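/- Let c ∈ C_n(X;ℝ) be a chain in the image of the symmetrisation map sym_n. Then ∂_j(c) = (-1)^j ∂_0(c) for every j ∈ {0,...,n}, and consequently ∂c = Σ_{j=0}^n (-1)^j ∂_j(c) = (n+1) · ∂_0(c). -/
import Mathlib


open Finset

noncomputable section SingularChains

/-- The affine map `Δ^k → Δ^n` extending the vertex map `π`. -/
def affMap {k n : ℕ} (π : Fin (k + 1) → Fin (n + 1)) :
    C(stdSimplex ℝ (Fin (k + 1)), stdSimplex ℝ (Fin (n + 1))) where
  toFun x := ⟨fun i => ∑ l ∈ Finset.univ.filter (fun l => π l = i), (x : Fin (k + 1) → ℝ) l, by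
    constructor
    · intro i
      exact Finset.sum_nonneg fun l _ => x.2.1 l
    · rw [← x.2.2]
      exact Finset.sum_fiberwise _ _ _⟩
  continuous_toFun := by
    apply Continuous.subtype_mk
    exact continuous_pi fun i =>
      continuous_finset_sum _ fun l _ => (continuous_apply l).comp continuous_subtype_val

variable {X : Type} [TopologicalSpace X]

/-- Singular `n`-simplices in `X`. -/
abbrev Sing (n : ℕ) (X : Type) [TopologicalSpace X] := C(stdSimplex ℝ (Fin (n + 1)), X)

/-- Singular `n`-chains with real coefficients. -/
abbrev Chain (n : ℕ) (X : Type) [TopologicalSpace X] := Sing n X →₀ ℝ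

/-- The `j`-th face map `∂ⱼ : C_{n+1}(X;ℝ) → C_n(X;ℝ)`. -/
def face {n : ℕ} (j : Fin (n + 2)) : Chain (n + 1) X →ₗ[ℝ] Chain n X :=
  Finsupp.lmapDomain ℝ ℝ fun σ => σ.comp (affMap (Fin.succAbove j))

/-- The singular boundary operator `∂ = Σⱼ (-1)ʲ ∂ⱼ`. -/
def bdry (n : ℕ) : Chain (n + 1) X →ₗ[ℝ] Chain n X :=
  ∑ j : Fin (n + 2), ((-1 : ℝ) ^ (j : ℕ)) • face j

/-- The symmetrisation of a singular simplex. -/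
def symSimplex {n : ℕ} (σ : Sing n X) : Chain n X :=
  (((n + 1).factorial : ℝ))⁻¹ •
    ∑ π : Equiv.Perm (Fin (n + 1)),
      ((Equiv.Perm.sign π : ℤ) : ℝ) • Finsupp.single (σ.comp (affMap π)) (1 : ℝ)

/-- The symmetrisation map `sym_n : C_n(X;ℝ) → C_n(X;ℝ)`. -/
def symCh (n : ℕ) : Chain n X →ₗ[ℝ] Chain n X :=
  Finsupp.lsum ℝ fun σ => LinearMap.toSpanSingleton ℝ _ (symSimplex σ)

/-- The ℓ¹-norm of a singular chain. -/
def l1 {n : ℕ} (c : Chain n X) : ℝ := ∑ σ ∈ c.support, |c σ|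

/-- Cycles. -/
def cyc (X : Type) [TopologicalSpace X] : (n : ℕ) → Submodule ℝ (Chain n X)
  | 0 => ⊤
  | n + 1 => LinearMap.ker (bdry n)

/-- Boundaries. -/
def bdries (X : Type) [TopologicalSpace X] (n : ℕ) : Submodule ℝ (Chain n X) :=
  LinearMap.range (bdry n)

/-- A chain is normalised if all but the last face map vanish on it. -/
def IsNormalised : {n : ℕ} → Chain n X → Prop
  | 0, _ => True
  | n + 1, c => ∀ j : Fin (n + 2), j ≠ Fin.last (n + 1) → face j c = 0

/-- The cyclic permutation `τⱼ = (j j-1 ⋯ 1 0)`. -/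
def tau (n : ℕ) (j : Fin (n + 1)) : Equiv.Perm (Fin (n + 1)) := (Fin.cycleRange j)⁻¹

end SingularChains

section Aux

open Finset

theorem affMap_comp {k m n : ℕ} (f : Fin (k + 1) → Fin (m + 1)) (g : Fin (m + 1) → Fin (n + 1)) :
    (affMap g).comp (affMap f) = affMap (g ∘ f) := by
  apply ContinuousMap.ext; intro x; apply Subtype.ext; funext i
  show ∑ mm ∈ univ.filter (fun mm => g mm = i),
        ∑ l ∈ univ.filter (fun l => f l = mm), (x : Fin (k + 1) → ℝ) l
      = ∑ l ∈ univ.filter (fun l => g (f l) = i), (x : Fin (k + 1) → ℝ) l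
  rw [← Finset.sum_fiberwise_of_maps_to (g := f)
      (s := univ.filter fun l => g (f l) = i) (t := univ.filter fun mm => g mm = i)
      (fun l hl => by simpa using (Finset.mem_filter.mp hl).2)]
  refine Finset.sum_congr rfl fun mm hmm => Finset.sum_congr ?_ fun _ _ => rfl
  have hg : g mm = i := by simpa using (Finset.mem_filter.mp hmm).2
  ext l
  simp only [Finset.mem_filter, Finset.mem_univ, true_and]
  constructor
  · intro h; exact ⟨by rw [h, hg], h⟩
  · exact fun h => h.2

variable {X : Type} [TopologicalSpace X]

theorem face_symSimplex {n : ℕ} (j : Fin (n + 2)) (σ : Sing (n + 1) X) :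
    face j (symSimplex σ) = ((-1 : ℝ) ^ (j : ℕ)) • face (0 : Fin (n + 2)) (symSimplex σ) := by
  have hface : ∀ (j : Fin (n + 2)) (π : Equiv.Perm (Fin (n + 2))),
      face (X := X) j (Finsupp.single (σ.comp (affMap π)) (1 : ℝ)) =
        Finsupp.single (σ.comp (affMap (⇑π ∘ Fin.succAbove j))) (1 : ℝ) := by
    intro j π
    rw [face, Finsupp.lmapDomain_apply, Finsupp.mapDomain_single, ContinuousMap.comp_assoc,
      affMap_comp]
  have key : ∀ π : Equiv.Perm (Fin (n + 2)),
      (⇑(π * Fin.cycleRange j)) ∘ Fin.succAbove j = ⇑π ∘ Fin.succAbove (0 : Fin (n + 2)) := by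
    intro π; funext x
    simp [Fin.succAbove_zero, Fin.cycleRange_succAbove]
  rw [symSimplex, map_smul, map_sum, map_smul, map_sum, smul_comm]
  congr 1
  simp only [map_smul, hface]
  refine (Fintype.sum_equiv (Equiv.mulRight (Fin.cycleRange j))
    (fun π => ((-1 : ℝ) ^ (j : ℕ)) •
      (((Equiv.Perm.sign π : ℤ) : ℝ) • Finsupp.single
        (σ.comp (affMap (⇑π ∘ Fin.succAbove (0 : Fin (n + 2))))) (1 : ℝ)))
    (fun π => ((Equiv.Perm.sign π : ℤ) : ℝ) • Finsupp.single
        (σ.comp (affMap (⇑π ∘ Fin.succAbove j))) (1 : ℝ)) ?_).symm.trans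
    (by rw [← Finset.smul_sum])
  intro π
  simp only [Equiv.coe_mulRight, key π, smul_smul]
  congr 1
  rw [Equiv.Perm.sign_mul, Fin.sign_cycleRange]
  push_cast
  ring

theorem face_symCh {n : ℕ} (j : Fin (n + 2)) (c : Chain (n + 1) X) :
    face j (symCh (n + 1) c) = ((-1 : ℝ) ^ (j : ℕ)) • face (0 : Fin (n + 2)) (symCh (n + 1) c) := by
  have h : (face (X := X) j).comp (symCh (n + 1)) =
      ((-1 : ℝ) ^ (j : ℕ)) • ((face (0 : Fin (n + 2))).comp (symCh (n + 1))) := by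
    apply Finsupp.lhom_ext; intro σ b
    simp only [LinearMap.comp_apply, LinearMap.smul_apply, symCh, Finsupp.lsum_single,
      LinearMap.toSpanSingleton_apply, map_smul]
    rw [face_symSimplex j σ, smul_comm]
  simpa using LinearMap.congr_fun h c

end Aux


/-- For a chain `c` in the image of the symmetrisation map, `∂ⱼ c = (-1)ʲ ∂₀ c`
for every `j`, and hence `∂ c = (n + 2) · ∂₀ c` (in degree `n + 1`). -/
theorem bdry_of_mem_range_symm (X : Type) [TopologicalSpace X] (n : ℕ) (c : Chain (n + 1) X)
    (hc : c ∈ LinearMap.range (symCh (n + 1) (X := X))) :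
    (∀ j : Fin (n + 2), face j c = ((-1 : ℝ) ^ (j : ℕ)) • face (0 : Fin (n + 2)) c) ∧
      bdry n c = ((n : ℝ) + 2) • face (0 : Fin (n + 2)) c := by
  obtain ⟨d, rfl⟩ := hc
  have h1 : ∀ j : Fin (n + 2), face j (symCh (n + 1) d) =
      ((-1 : ℝ) ^ (j : ℕ)) • face (0 : Fin (n + 2)) (symCh (n + 1) d) := fun j => face_symCh j d
  refine ⟨h1, ?_⟩
  rw [bdry, LinearMap.sum_apply]
  have hev : ∀ j : Fin (n + 2), ((-1 : ℝ)) ^ ((j : ℕ) + (j : ℕ)) = 1 := fun j =>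
    Even.neg_one_pow ⟨(j : ℕ), rfl⟩
  rw [Finset.sum_congr rfl (fun j _ => by
    rw [LinearMap.smul_apply, h1 j, smul_smul, ← pow_add, hev j, one_smul])]
  simp only [Finset.sum_const, Finset.card_univ, Fintype.card_fin]
  rw [← Nat.cast_smul_eq_nsmul ℝ]
  push_cast
  ring_nf
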